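/- The weight of final states equals their space: if s = (λx.t, e, ε) is a final Space KAM state typed ⊢^w s : ⋆, then w = |s|. -/

import Mathlib

/-! ## Lambda terms, substitution, weak head reduction -/

inductive Tm : Type
  | var : ℕ → Tm
  | lam : ℕ → Tm → Tm
  | app : Tm → Tm → Tm
deriving DecidableEq

def subst (x : ℕ) (u : Tm) : Tm → Tm
  | .var y => if y = x then u else .var y
  | .lam y t => if y = x then .lam y t else .lam y (subst x u t)
  | .app t s => .app (subst x u t) (subst x u s)

def fv : Tm → Finset ℕ
  | .var x => {x}
  | .lam x t => fv t \ {x}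
  | .app t u => fv t ∪ fv u

/-- Weak head reduction: `(λx.t) u r₁ … r_h →wh t[x:=u] r₁ … r_h`. -/
inductive Wh : Tm → Tm → Prop
  | beta (x : ℕ) (t u : Tm) : Wh (.app (.lam x t) u) (subst x u t)
  | appL {t t' : Tm} (u : Tm) : Wh t t' → Wh (.app t u) (.app t' u)

/-! ## Space KAM -/

mutual
inductive Clo : Type
  | mk : Tm → Env → Clo
inductive Env : Type
  | nil : Env
  | cons : ℕ → Clo → Env → Env
end

def Env.lookup : Env → ℕ → Option Clo
  | .nil, _ => none
  | .cons y c e, x => if x = y then some c else e.lookup x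

def Env.dom : Env → Finset ℕ
  | .nil => ∅
  | .cons y _ e => insert y e.dom

/-- `e.restrict V` is the restriction `e|_V` of `e` to the variables in `V`. -/
def Env.restrict : Env → Finset ℕ → Env
  | .nil, _ => .nil
  | .cons y c e, V => if y ∈ V then .cons y c (e.restrict V) else e.restrict V

structure State : Type where
  tm : Tm
  env : Env
  stk : List Clo

/-- Space KAM transitions (with unchaining and eager garbage collection). -/
inductive SpKAM : State → State → Prop
  | sea_v {t : Tm} {x : ℕ} {e : Env} {S : List Clo} {c : Clo} :
      e.lookup x = some c →
      SpKAM ⟨.app t (.var x), e, S⟩ ⟨t, e.restrict (fv t), c :: S⟩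
  | sea_nv {t u : Tm} {e : Env} {S : List Clo} :
      (∀ y, u ≠ .var y) →
      SpKAM ⟨.app t u, e, S⟩ ⟨t, e.restrict (fv t), Clo.mk u (e.restrict (fv u)) :: S⟩
  | beta_w {x : ℕ} {t : Tm} {e : Env} {c : Clo} {S : List Clo} :
      x ∉ fv t →
      SpKAM ⟨.lam x t, e, c :: S⟩ ⟨t, e, S⟩
  | beta_nw {x : ℕ} {t : Tm} {e : Env} {c : Clo} {S : List Clo} :
      x ∈ fv t →
      SpKAM ⟨.lam x t, e, c :: S⟩ ⟨t, .cons x c e, S⟩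
  | sub {x : ℕ} {e e' : Env} {u : Tm} {S : List Clo} :
      e.lookup x = some (Clo.mk u e') →
      SpKAM ⟨.var x, e, S⟩ ⟨u, e', S⟩

/-- A state is reachable if it is the target of a run from an initial state
`(t₀, ε, ε)` with `t₀` closed. -/
def Reachable (s : State) : Prop :=
  ∃ t₀ : Tm, fv t₀ = ∅ ∧ Relation.ReflTransGen SpKAM ⟨t₀, .nil, []⟩ s

mutual
def Clo.closures : Clo → List Clo
  | .mk t e => .mk t e :: e.closures
def Env.closures : Env → List Clo
  | .nil => []
  | .cons _ c e => c.closures ++ e.closures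
end

/-- All closures occurring in a state (including the active closure). -/
def State.closures (s : State) : List Clo :=
  (Clo.mk s.tm s.env).closures ++ (s.stk.map Clo.closures).flatten

mutual
def Clo.size : Clo → ℕ
  | .mk _ e => 1 + e.size
def Env.size : Env → ℕ
  | .nil => 0
  | .cons _ c e => c.size + e.size
end

def State.size (s : State) : ℕ := s.env.size + (s.stk.map Clo.size).sum

def Clo.env : Clo → Env
  | .mk _ e => e

/-- Final states: no transition applies. -/
def Final (s : State) : Prop := ∀ s', ¬ SpKAM s s'

/-- Runs together with their abstract space consumption (the maximum of the
sizes of the traversed states). -/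
inductive RunSp : State → State → ℕ → Prop
  | refl (s : State) : RunSp s s s.size
  | step {s s' s'' : State} {m : ℕ} :
      SpKAM s s' → RunSp s' s'' m → RunSp s s'' (max s.size m)

/-! ## Closure types -/

mutual
inductive LTy : Type
  | star : LTy
  | arr : MTy → LTy → LTy
inductive MTy : Type
  | mk : List LTy → ℕ → MTy
end

def MTy.idx : MTy → ℕ | .mk _ k => k

def MTy.union : MTy → MTy → MTy
  | .mk l k, .mk l' _ => .mk (l ++ l') k

def LTy.size : LTy → ℕ
  | .star => 0
  | .arr M A => M.idx + A.size

/-- Type contexts: finitely supported assignments of closure types to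
variables (outside the domain the default `[]^1` is assigned). -/
structure Ctx : Type where
  dom : Finset ℕ
  ty : ℕ → MTy
  off_dom : ∀ x ∉ dom, ty x = MTy.mk [] 1

def Ctx.size (Γ : Ctx) : ℕ := Γ.dom.sum fun x => (Γ.ty x).idx

def Ctx.Dry (Γ : Ctx) : Prop :=
  ∀ x ∈ Γ.dom, ∃ k, 0 < k ∧ Γ.ty x = MTy.mk [] k

def Ctx.Summable (Γ Δ : Ctx) : Prop :=
  ∀ x ∈ Γ.dom ∩ Δ.dom, (Γ.ty x).idx = (Δ.ty x).idx

def Ctx.empty : Ctx := ⟨∅, fun _ => MTy.mk [] 1, fun _ _ => rfl⟩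

def Ctx.single (x : ℕ) (M : MTy) : Ctx :=
  ⟨{x}, fun y => if y = x then M else MTy.mk [] 1, by
    intro y hy
    simp only [Finset.mem_singleton] at hy
    simp [hy]⟩

def Ctx.extend (Γ : Ctx) (x : ℕ) (M : MTy) : Ctx :=
  ⟨insert x Γ.dom, Function.update Γ.ty x M, by
    intro y hy
    simp only [Finset.mem_insert, not_or] at hy
    rw [Function.update_of_ne hy.1]
    exact Γ.off_dom y hy.2⟩

def Ctx.union (Γ Δ : Ctx) : Ctx :=
  ⟨Γ.dom ∪ Δ.dom,
   fun x =>
     if x ∈ Γ.dom then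
       (if x ∈ Δ.dom then (Γ.ty x).union (Δ.ty x) else Γ.ty x)
     else Δ.ty x,
   by
    intro x hx
    simp only [Finset.mem_union, not_or] at hx
    simp [hx.1, hx.2, Δ.off_dom x hx.2]⟩

/-! ## The weighted closure type system (space weights), with derivation
sizes (counting all rules except T-many, T-none, T-cl, T-env). -/

mutual
/-- `TJ Γ t A w n`: the judgment `Γ ⊢ t : A` is derivable with weight `w`
by a derivation of size `n`. -/
inductive TJ : Ctx → Tm → LTy → ℕ → ℕ → Prop
  | var {x : ℕ} {A : LTy} {k : ℕ} : 0 < k →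
      TJ (Ctx.single x (.mk [A] k)) (.var x) A (k + A.size) 1
  | lamStar {Γ : Ctx} {x : ℕ} {t : Tm} :
      Γ.Dry → Γ.dom = fv (.lam x t) →
      TJ Γ (.lam x t) .star Γ.size 1
  | lam1 {Γ : Ctx} {x : ℕ} {M : MTy} {t : Tm} {A : LTy} {w n : ℕ} :
      x ∉ Γ.dom →
      TJ (Γ.extend x M) t A w n →
      TJ Γ (.lam x t) (.arr M A) w (n + 1)
  | lam2 {Γ : Ctx} {x : ℕ} {t : Tm} {A : LTy} {k w n : ℕ} :
      x ∉ Γ.dom → 0 < k →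
      TJ Γ t A w n →
      TJ Γ (.lam x t) (.arr (.mk [] k) A) (max w (Γ.size + A.size + k)) (n + 1)
  | app1 {Γ Δ : Ctx} {t u : Tm} {M : MTy} {A : LTy} {w v n m : ℕ} :
      Γ.Summable Δ →
      TJ Γ t (.arr M A) w n → MJ Δ u M v m →
      TJ (Γ.union Δ) (.app t u) A (max w v) (n + m + 1)
  | app2 {Γ : Ctx} {x : ℕ} {t : Tm} {M : MTy} {A : LTy} {w n : ℕ} :
      Γ.Summable (Ctx.single x M) →
      TJ Γ t (.arr M A) w n →
      TJ (Γ.union (Ctx.single x M)) (.app t (.var x)) A w (n + 1)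

/-- `MJ Γ t 𝒜 w n`: multiset judgment (rules T-none / T-many). -/
inductive MJ : Ctx → Tm → MTy → ℕ → ℕ → Prop
  | none {Γ : Ctx} {t : Tm} :
      Γ.Dry → Γ.dom = fv t →
      MJ Γ t (.mk [] (1 + Γ.size)) 0 0
  | one {Γ : Ctx} {t : Tm} {A : LTy} {w n : ℕ} :
      TJ Γ t A w n →
      MJ Γ t (.mk [A] (1 + Γ.size)) w n
  | cons {Γ Δ : Ctx} {t : Tm} {A : LTy} {l : List LTy} {w v n m : ℕ} :
      Γ.Summable Δ →
      TJ Γ t A w n → MJ Δ t (.mk l (1 + Δ.size)) v m →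
      MJ (Γ.union Δ) t (.mk (A :: l) (1 + (Γ.union Δ).size)) (max w v) (n + m)
end

/-! ## Typing of machine components -/

mutual
/-- `EJ e Γ w n`: rule T-env, typing an environment with a type context. -/
inductive EJ : Env → Ctx → ℕ → ℕ → Prop
  | nil : EJ .nil Ctx.empty 0 0
  | cons {e : Env} {Γ : Ctx} {x : ℕ} {c : Clo} {M : MTy} {w v n m : ℕ} :
      x ∉ Γ.dom →
      CJ c M w n → EJ e Γ v m →
      EJ (.cons x c e) (Γ.extend x M) (max w v) (n + m)

/-- `CJ c 𝒜 w n`: rule T-cl, typing a closure with a closure type. -/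
inductive CJ : Clo → MTy → ℕ → ℕ → Prop
  | mk {t : Tm} {e : Env} {Γ : Ctx} {M : MTy} {w v n m : ℕ} :
      EJ e Γ w n → MJ Γ t M v m →
      CJ (.mk t e) M (max w v) (n + m)
end

/-- Typing of stacks against the arrow structure of a linear type ending in `⋆`. -/
inductive SJ : List Clo → LTy → ℕ → ℕ → Prop
  | nil : SJ [] .star 0 0
  | cons {c : Clo} {M : MTy} {S : List Clo} {A : LTy} {w v n m : ℕ} :
      CJ c M w n → SJ S A v m →
      SJ (c :: S) (.arr M A) (max w v) (n + m)

/-- `StJ s w n`: rule T-st, typing a state with `⋆`. -/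
inductive StJ : State → ℕ → ℕ → Prop
  | mk {t : Tm} {e : Env} {S : List Clo} {Γ : Ctx} {A : LTy} {w u v n m p : ℕ} :
      TJ Γ t A w n → EJ e Γ u m → SJ S A v p →
      StJ ⟨t, e, S⟩ (max w (max u v)) (n + m + p)

/-! ## Auxiliary lemmas -/

lemma Ctx.extend_size {Γ : Ctx} {x : ℕ} {M : MTy} (hx : x ∉ Γ.dom) :
    (Γ.extend x M).size = M.idx + Γ.size := by
  unfold Ctx.size Ctx.extend
  rw [Finset.sum_insert hx]
  simp only [Function.update_self]
  congr 1
  refine Finset.sum_congr rfl fun y hy => ?_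
  have hne : y ≠ x := fun h => hx (h ▸ hy)
  rw [Function.update_of_ne hne]

lemma dry_extend {Γ : Ctx} {x : ℕ} {M : MTy}
    (hx : x ∉ Γ.dom) (hd : (Γ.extend x M).Dry) :
    (∃ k, 0 < k ∧ M = .mk [] k) ∧ Γ.Dry := by
  constructor
  · obtain ⟨k, hk, hM⟩ := hd x (by simp [Ctx.extend])
    refine ⟨k, hk, ?_⟩
    simpa [Ctx.extend, Function.update_self] using hM
  · intro y hy
    obtain ⟨k, hk, hM⟩ := hd y (by simp [Ctx.extend, hy])
    refine ⟨k, hk, ?_⟩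
    have hne : y ≠ x := fun h => hx (h ▸ hy)
    simpa [Ctx.extend, Function.update_of_ne hne] using hM

mutual

theorem dry_ej : ∀ (e : Env) {Γ : Ctx} {u m : ℕ},
    EJ e Γ u m → Γ.Dry → u = 0 ∧ Env.size e = Γ.size
  | .nil, Γ, u, m, h, _ => by
      cases h
      simp [Env.size, Ctx.size, Ctx.empty]
  | .cons x c e, Γ, u, m, h, hd => by
      cases h with
      | cons hx hc he =>
        obtain ⟨⟨k, hk, hM⟩, hdry⟩ := dry_extend hx hd
        subst hM
        obtain ⟨hw, hcs⟩ := dry_cj c hc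
        obtain ⟨hv, hes⟩ := dry_ej e he hdry
        subst hw; subst hv
        refine ⟨rfl, ?_⟩
        rw [Ctx.extend_size hx]
        simp [Env.size, hcs, hes, MTy.idx]

theorem dry_cj : ∀ (c : Clo) {k w n : ℕ},
    CJ c (.mk [] k) w n → w = 0 ∧ Clo.size c = k
  | .mk t e, k, w, n, h => by
      cases h with
      | mk he hm =>
        cases hm with
        | none hd hdom =>
          obtain ⟨hw, hes⟩ := dry_ej e he hd
          subst hw
          exact ⟨rfl, by simp [Clo.size, hes]⟩

end

theorem ej_lookup : ∀ (e : Env) {Γ : Ctx} {u m x : ℕ},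
    EJ e Γ u m → x ∈ Γ.dom → ∃ c, e.lookup x = some c
  | .nil, Γ, u, m, x, h, hx => by
      cases h
      simp [Ctx.empty] at hx
  | .cons y c e, Γ, u, m, x, h, hx => by
      cases h with
      | @cons e₀ Γ₀ y₀ c₀ M₀ w₀ v₀ n₀ m₀ hy hc he =>
        by_cases hxy : x = y
        · exact ⟨c, by simp [Env.lookup, hxy]⟩
        · have hx' : x ∈ Γ₀.dom := by
            simpa [Ctx.extend, hxy] using hx
          obtain ⟨c', hc'⟩ := ej_lookup e he hx'
          exact ⟨c', by simp [Env.lookup, hxy, hc']⟩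

lemma tj_var_dom {Γ : Ctx} {y : ℕ} {A : LTy} {w n : ℕ}
    (h : TJ Γ (.var y) A w n) : y ∈ Γ.dom := by
  cases h
  simp [Ctx.single]

lemma mj_var_dom {Δ : Ctx} {y : ℕ} {M : MTy} {v m : ℕ}
    (h : MJ Δ (.var y) M v m) : y ∈ Δ.dom := by
  cases h with
  | none hd hdom => rw [hdom]; simp [fv]
  | one ht => exact tj_var_dom ht
  | cons hsum ht hm =>
    have := tj_var_dom ht
    simp [Ctx.union, this]

/-- the weight of final states equals their space. -/
theorem final_state_weight_is_space {s : State} {w n : ℕ}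
    (hfin : Final s) (h : StJ s w n) : w = s.size := by
  cases h with
  | @mk t e S Γ A w' u v n' m p hTJ hEJ hSJ =>
    cases t with
    | var x =>
      exfalso
      have hx : x ∈ Γ.dom := tj_var_dom hTJ
      obtain ⟨c, hc⟩ := ej_lookup e hEJ hx
      obtain ⟨u', e'⟩ := c
      exact hfin _ (SpKAM.sub hc)
    | app t u =>
      exfalso
      by_cases hv : ∃ y, u = .var y
      · obtain ⟨y, rfl⟩ := hv
        have hy : y ∈ Γ.dom := by
          cases hTJ with
          | app1 hsum ht hm =>
            have := mj_var_dom hm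
            simp [Ctx.union, this]
          | app2 hsum ht =>
            simp [Ctx.union, Ctx.single]
        obtain ⟨c, hc⟩ := ej_lookup e hEJ hy
        exact hfin _ (SpKAM.sea_v hc)
      · push_neg at hv
        exact hfin _ (SpKAM.sea_nv hv)
    | lam x t =>
      cases S with
      | cons c S' =>
        exfalso
        by_cases hx : x ∈ fv t
        · exact hfin _ (SpKAM.beta_nw hx)
        · exact hfin _ (SpKAM.beta_w hx)
      | nil =>
        cases hSJ
        cases hTJ with
        | lamStar hd hdom =>
          obtain ⟨hu, hes⟩ := dry_ej e hEJ hd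
          subst hu
          simp [State.size, hes]
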